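/- Let A be a real k × n matrix with A Aᵀ = I_k. For a k-element subset S ⊆ {1,…,n}, let A_S denote the k × k submatrix of A formed by the columns indexed by S. Then for every fixed j ∈ {1,…,n}, the sum of det(A_S)² over all k-element subsets S containing j equals α_j² := Σ_{i=1}^k a_{ij}², the squared Euclidean norm of the j-th column of A. -/

import Mathlib

open MeasureTheory ProbabilityTheory Module
open scoped ENNReal NNReal

noncomputable section

namespace BLEPI

/-- Differential entropy of a measure on a space equipped with a canonical volume:
`h(μ) = -∫ log (dμ/dvol) dμ`, which equals `-∫ f log f dvol` when `μ` has density `f`. -/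
def dEnt {E : Type*} [MeasureSpace E] (μ : Measure E) : ℝ :=
  -∫ x, Real.log ((μ.rnDeriv volume x).toReal) ∂μ

/-- Condition (*) : `μ` has a density `f` w.r.t. volume with `∫ f log (1 + f) < ∞`. -/
def CondStar {E : Type*} [MeasureSpace E] (μ : Measure E) : Prop :=
  μ ≪ (volume : Measure E) ∧
    Integrable (fun x => ((μ.rnDeriv volume x).toReal) *
      Real.log (1 + (μ.rnDeriv volume x).toReal)) (volume : Measure E)

/-- Convolution of two measures. -/
def mconv {E : Type*} [MeasurableSpace E] [Add E] (μ ν : Measure E) : Measure E :=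
  (μ.prod ν).map (fun p => p.1 + p.2)

/-- The centered Gaussian product measure on `ℝ^d` whose coordinates are
independent centered Gaussians of variance `v`. -/
def gaussPi (v : ℝ≥0) (d : ℕ) : Measure (EuclideanSpace ℝ (Fin d)) :=
  (Measure.pi fun _ : Fin d => gaussianReal 0 v).map
    (MeasurableEquiv.toLp 2 (Fin d → ℝ))

/-- The standard Gaussian measure `N(0, I_n)` on `Fin n → ℝ`. -/
def stdGauss (n : ℕ) : Measure (Fin n → ℝ) := Measure.pi fun _ : Fin n => gaussianReal 0 1

/-- `μ` is the centered Gaussian measure on `ℝ^d` with covariance matrix `S`. -/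
def IsCenteredGaussian {d : ℕ} (μ : Measure (EuclideanSpace ℝ (Fin d)))
    (S : Matrix (Fin d) (Fin d) ℝ) : Prop :=
  ∃ L : Matrix (Fin d) (Fin d) ℝ, L * L.transpose = S ∧
    μ = (gaussPi 1 d).map
      (fun x => (EuclideanSpace.equiv (Fin d) ℝ).symm (L.mulVec (EuclideanSpace.equiv (Fin d) ℝ x)))

/-- The data `(A, c, r, d)` of a BL-EPI datum (validity conditions are stated separately,
so that induced data with possibly zero-dimensional blocks are also representable). -/
structure Datum where
  m : ℕ
  k : ℕ
  r : Fin k → ℕ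
  nt : Fin m → ℕ
  A : ∀ j : Fin m, ((i : Fin k) → EuclideanSpace ℝ (Fin (r i))) →ₗ[ℝ] EuclideanSpace ℝ (Fin (nt j))
  c : Fin m → ℝ
  d : Fin k → ℝ

/-- The ambient space `ℝ^n = ℝ^{r_1} × ⋯ × ℝ^{r_k}`. -/
abbrev Datum.E (D : Datum) : Type := (i : Fin D.k) → EuclideanSpace ℝ (Fin (D.r i))

/-- The two-copy ambient space `ℝ^{2r_1} × ⋯ × ℝ^{2r_k}`. -/
abbrev Datum.E2 (D : Datum) : Type :=
  (i : Fin D.k) → EuclideanSpace ℝ (Fin (D.r i)) × EuclideanSpace ℝ (Fin (D.r i))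

/-- Validity of a BL-EPI datum: `m, k, r_i` positive, the `A_j` surjective, `c, d` nonneg. -/
def Datum.Valid (D : Datum) : Prop :=
  0 < D.m ∧ 0 < D.k ∧ (∀ i, 0 < D.r i) ∧ (∀ j, Function.Surjective (D.A j)) ∧
    (∀ j, 0 ≤ D.c j) ∧ (∀ i, 0 ≤ D.d i)

/-- Membership of a law `ν` on `ℝ^n` in the class `P(r)`: a probability measure whose
blocks are mutually independent, each block having a density satisfying (*), with zero
mean and finite second moments. -/
def MemP (D : Datum) (ν : Measure D.E) : Prop :=
  IsProbabilityMeasure ν ∧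
  ν = Measure.pi (fun i => ν.map (fun x => x i)) ∧
  (∀ i, CondStar (ν.map (fun x => x i))) ∧
  (∀ i (a : Fin (D.r i)), ∫ x, x i a ∂ν = 0) ∧
  (∀ i (a : Fin (D.r i)), Integrable (fun x => (x i a) ^ 2) ν)

/-- Membership in `P_g(r)` : member of `P(r)` with Gaussian blocks. -/
def MemPg (D : Datum) (ν : Measure D.E) : Prop :=
  MemP D ν ∧ ∀ i, ∃ S : Matrix (Fin (D.r i)) (Fin (D.r i)) ℝ,
    IsCenteredGaussian (ν.map (fun x => x i)) S

/-- Membership of a joint law on `ℝ^{2r_1} × ⋯ × ℝ^{2r_k}` in `P(2r)` : the pairs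
`(X_{i1}, X_{i2})` are mutually independent, each with a density satisfying (*),
zero mean and finite second moments. -/
def MemP2 (D : Datum) (ν : Measure D.E2) : Prop :=
  IsProbabilityMeasure ν ∧
  ν = Measure.pi (fun i => ν.map (fun x => x i)) ∧
  (∀ i, CondStar (ν.map (fun x => x i))) ∧
  (∀ i (a : Fin (D.r i)), ∫ x, (x i).1 a ∂ν = 0) ∧
  (∀ i (a : Fin (D.r i)), ∫ x, (x i).2 a ∂ν = 0) ∧
  (∀ i (a : Fin (D.r i)), Integrable (fun x => ((x i).1 a) ^ 2) ν) ∧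
  (∀ i (a : Fin (D.r i)), Integrable (fun x => ((x i).2 a) ^ 2) ν)

/-- The objective `Σ d_i h(X_i) - Σ c_j h(A_j X)` as a function of the law of `X`. -/
def obj (D : Datum) (ν : Measure D.E) : ℝ :=
  ∑ i, D.d i * dEnt (ν.map (fun x => x i)) - ∑ j, D.c j * dEnt (ν.map (D.A j))

/-- `M = sup_{X ∈ P(r)} (Σ d_i h(X_i) - Σ c_j h(A_j X))`, as an extended real. -/
def Mval (D : Datum) : EReal :=
  sSup {y : EReal | ∃ ν : Measure D.E, MemP D ν ∧ y = ((obj D ν : ℝ) : EReal)}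

/-- `M_g`, the same supremum restricted to Gaussian members. -/
def Mgval (D : Datum) : EReal :=
  sSup {y : EReal | ∃ ν : Measure D.E, MemPg D ν ∧ y = ((obj D ν : ℝ) : EReal)}

/-- Condition (i) of the finiteness theorem: for every `r`-product form subspace
`V = V_1 × ⋯ × V_k`, `Σ d_i dim V_i ≤ Σ c_j dim (A_j V)`. -/
def Cond1 (D : Datum) : Prop :=
  ∀ V : ∀ i : Fin D.k, Submodule ℝ (EuclideanSpace ℝ (Fin (D.r i))),
    ∑ i, D.d i * (finrank ℝ (V i) : ℝ) ≤
      ∑ j, D.c j * (finrank ℝ ((Submodule.pi Set.univ V).map (D.A j)) : ℝ)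

/-- Condition (ii) of the finiteness theorem: `Σ d_i r_i = Σ c_j n_j`. -/
def Cond2 (D : Datum) : Prop :=
  ∑ i, D.d i * (D.r i : ℝ) = ∑ j, D.c j * (D.nt j : ℝ)

/-- The law of `√δ W = (√δ W_1, …, √δ W_k)` on the ambient space. -/
def gaussE (D : Datum) (δ : ℝ) : Measure D.E := Measure.pi fun i => gaussPi δ.toNNReal (D.r i)

/-- `s_{ε,δ}` as a function of the law `ν` of `X`:
`Σ d_i h(X_i + √δ W_i) - Σ c_j h(A_j (X + √δ W) + √ε Z_j)`. -/
def sFun (D : Datum) (ε δ : ℝ) (ν : Measure D.E) : ℝ :=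
  ∑ i, D.d i * dEnt (mconv (ν.map (fun x => x i)) (gaussPi δ.toNNReal (D.r i))) -
    ∑ j, D.c j * dEnt (mconv (ν.map (D.A j))
      (mconv ((gaussE D δ).map (D.A j)) (gaussPi ε.toNNReal (D.nt j))))

/-- The law of the noise `(A_j (√δ W_1) + √ε Z_{j1}, A_j (√δ W_2) + √ε Z_{j2})`. -/
def noise2 (D : Datum) (ε δ : ℝ) (j : Fin D.m) :
    Measure (EuclideanSpace ℝ (Fin (D.nt j)) × EuclideanSpace ℝ (Fin (D.nt j))) :=
  (mconv ((gaussE D δ).map (D.A j)) (gaussPi ε.toNNReal (D.nt j))).prod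
    (mconv ((gaussE D δ).map (D.A j)) (gaussPi ε.toNNReal (D.nt j)))

/-- The two-copy version of `s_{ε,δ}` as a function of the joint law `ν` of `(X_1, X_2)`. -/
def sFun2 (D : Datum) (ε δ : ℝ) (ν : Measure D.E2) : ℝ :=
  ∑ i, D.d i * dEnt (mconv (ν.map (fun x => x i))
      ((gaussPi δ.toNNReal (D.r i)).prod (gaussPi δ.toNNReal (D.r i)))) -
    ∑ j, D.c j * dEnt (mconv
      (ν.map (fun x => (D.A j (fun i => (x i).1), D.A j (fun i => (x i).2))))
      (noise2 D ε δ j))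

/-- `s_{ε,δ}(X ∣ U) = Σ_u P(U = u) s_{ε,δ}(X ∣ U = u)` for a finite-valued `U`. -/
def sCond (D : Datum) (ε δ : ℝ) {Ω ι : Type*} [MeasurableSpace Ω] [Fintype ι]
    (P : Measure Ω) (X : Ω → D.E) (U : Ω → ι) : ℝ :=
  ∑ u : ι, (P (U ⁻¹' {u})).toReal * sFun D ε δ ((P[|U ⁻¹' {u}]).map X)

/-- the two-copy version of `s_{ε,δ}(X₁, X₂ ∣ U)`. -/
def sCond2 (D : Datum) (ε δ : ℝ) {Ω ι : Type*} [MeasurableSpace Ω] [Fintype ι]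
    (P : Measure Ω) (X : Ω → D.E2) (U : Ω → ι) : ℝ :=
  ∑ u : ι, (P (U ⁻¹' {u})).toReal * sFun2 D ε δ ((P[|U ⁻¹' {u}]).map X)

/-- `S_{ε,δ}(X)`: the supremum of `s_{ε,δ}(X ∣ U)` over finite-valued auxiliaries `U`
whose conditional laws lie in `P(r)`; expressed distributionally via finite mixtures. -/
def SVal (D : Datum) (ε δ : ℝ) (ν : Measure D.E) : EReal :=
  sSup {y : EReal | ∃ (t : ℕ) (p : Fin t → ℝ≥0) (νs : Fin t → Measure D.E),
    (∑ u, p u) = 1 ∧ (∀ u, MemP D (νs u)) ∧ (∑ u, ((p u : ℝ≥0∞) • νs u)) = ν ∧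
    y = ((∑ u, (p u : ℝ) * sFun D ε δ (νs u) : ℝ) : EReal)}

/-- The two-copy version `S_{ε,δ}(X₁, X₂)`. -/
def SVal2 (D : Datum) (ε δ : ℝ) (ν : Measure D.E2) : EReal :=
  sSup {y : EReal | ∃ (t : ℕ) (p : Fin t → ℝ≥0) (νs : Fin t → Measure D.E2),
    (∑ u, p u) = 1 ∧ (∀ u, MemP2 D (νs u)) ∧ (∑ u, ((p u : ℝ≥0∞) • νs u)) = ν ∧
    y = ((∑ u, (p u : ℝ) * sFun2 D ε δ (νs u) : ℝ) : EReal)}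

/-- The law of `X₁` under a two-copy law. -/
def marg1 (D : Datum) (ν : Measure D.E2) : Measure D.E := ν.map (fun x i => (x i).1)

/-- The law of `X₂` under a two-copy law. -/
def marg2 (D : Datum) (ν : Measure D.E2) : Measure D.E := ν.map (fun x i => (x i).2)

/-- The joint law of `(X₁, X₂)` when `X₁ ∼ μ₁` and `X₂ ∼ μ₂` are independent. -/
def coupleIndep (D : Datum) (μ₁ μ₂ : Measure D.E) : Measure D.E2 :=
  (μ₁.prod μ₂).map (fun p i => (p.1 i, p.2 i))

/-- `E[X Xᵀ] ⪯ Σ` where `Σ = Diag(Σ_1, …, Σ_k)`, expressed via quadratic forms. -/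
def covLE (D : Datum) (ν : Measure D.E)
    (S : ∀ i, Matrix (Fin (D.r i)) (Fin (D.r i)) ℝ) : Prop :=
  ∀ v : D.E, ∫ x, (∑ i, ∑ a, v i a * x i a) ^ 2 ∂ν ≤
    ∑ i, ∑ a, ∑ b, v i a * S i a b * v i b

/-- `V(Σ) = sup { S_{ε,δ}(X) : X ∈ P(r), E[X Xᵀ] ⪯ Σ }`. -/
def VVal (D : Datum) (ε δ : ℝ) (S : ∀ i, Matrix (Fin (D.r i)) (Fin (D.r i)) ℝ) : EReal :=
  sSup {y : EReal | ∃ ν : Measure D.E, MemP D ν ∧ covLE D ν S ∧ y = SVal D ε δ ν}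

/-- The `r`-product form subspace `U_1 × ⋯ × U_k` of the ambient space. -/
def prodSub (D : Datum) (U : ∀ i, Submodule ℝ (EuclideanSpace ℝ (Fin (D.r i)))) :
    Submodule ℝ D.E := Submodule.pi Set.univ U

/-- `A_j U`, the image of the product subspace under `A_j`. -/
def AjU (D : Datum) (U : ∀ i, Submodule ℝ (EuclideanSpace ℝ (Fin (D.r i)))) (j : Fin D.m) :
    Submodule ℝ (EuclideanSpace ℝ (Fin (D.nt j))) := (prodSub D U).map (D.A j)

/-- Embedding of coordinates of `U` into the ambient space via linear isometries `φ_i`. -/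
def embedMap (D : Datum) (U : ∀ i, Submodule ℝ (EuclideanSpace ℝ (Fin (D.r i))))
    (φ : ∀ i, EuclideanSpace ℝ (Fin (finrank ℝ (U i))) ≃ₗᵢ[ℝ] U i) :
    ((i : Fin D.k) → EuclideanSpace ℝ (Fin (finrank ℝ (U i)))) →ₗ[ℝ] D.E :=
  LinearMap.pi (fun i => (U i).subtype ∘ₗ ((φ i).toLinearEquiv : _ ≃ₗ[ℝ] _).toLinearMap ∘ₗ
    LinearMap.proj i)

lemma embedMap_mem (D : Datum) (U : ∀ i, Submodule ℝ (EuclideanSpace ℝ (Fin (D.r i))))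
    (φ : ∀ i, EuclideanSpace ℝ (Fin (finrank ℝ (U i))) ≃ₗᵢ[ℝ] U i)
    (v : (i : Fin D.k) → EuclideanSpace ℝ (Fin (finrank ℝ (U i)))) :
    embedMap D U φ v ∈ prodSub D U :=
  Submodule.mem_pi.mpr (fun i _ => ((φ i) (v i)).2)

/-- The induced BL-EPI datum on `U = U_1 × ⋯ × U_k`, with maps `Ã_j : U → A_j U` given by
restriction of `A_j`, expressed in coordinates via linear isometries `φ_i`, `ψ_j`. -/
def inducedU (D : Datum) (U : ∀ i, Submodule ℝ (EuclideanSpace ℝ (Fin (D.r i))))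
    (φ : ∀ i, EuclideanSpace ℝ (Fin (finrank ℝ (U i))) ≃ₗᵢ[ℝ] U i)
    (ψ : ∀ j, EuclideanSpace ℝ (Fin (finrank ℝ (AjU D U j))) ≃ₗᵢ[ℝ] AjU D U j) : Datum where
  m := D.m
  k := D.k
  r := fun i => finrank ℝ (U i)
  nt := fun j => finrank ℝ (AjU D U j)
  A := fun j => ((ψ j).symm.toLinearEquiv : _ ≃ₗ[ℝ] _).toLinearMap ∘ₗ
    LinearMap.codRestrict (AjU D U j) (D.A j ∘ₗ embedMap D U φ)
      (fun v => Submodule.mem_map_of_mem (embedMap_mem D U φ v))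
  c := D.c
  d := D.d

/-- Embedding of coordinates of `U^⊥ = U_1^⊥ × ⋯ × U_k^⊥` into the ambient space. -/
def embedMapPerp (D : Datum) (U : ∀ i, Submodule ℝ (EuclideanSpace ℝ (Fin (D.r i))))
    (φ : ∀ i, EuclideanSpace ℝ (Fin (finrank ℝ ((U i)ᗮ))) ≃ₗᵢ[ℝ] (U i)ᗮ) :
    ((i : Fin D.k) → EuclideanSpace ℝ (Fin (finrank ℝ ((U i)ᗮ)))) →ₗ[ℝ] D.E :=
  LinearMap.pi (fun i => ((U i)ᗮ).subtype ∘ₗ ((φ i).toLinearEquiv : _ ≃ₗ[ℝ] _).toLinearMap ∘ₗ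
    LinearMap.proj i)

/-- The induced BL-EPI datum on `U^⊥`, with maps `Ã̃_j x = Π_{(A_j U)^⊥} (A_j x)`
expressed in coordinates via linear isometries `φ'_i`, `ψ'_j`. -/
def inducedUperp (D : Datum) (U : ∀ i, Submodule ℝ (EuclideanSpace ℝ (Fin (D.r i))))
    (φ' : ∀ i, EuclideanSpace ℝ (Fin (finrank ℝ ((U i)ᗮ))) ≃ₗᵢ[ℝ] (U i)ᗮ)
    (ψ' : ∀ j, EuclideanSpace ℝ (Fin (finrank ℝ ((AjU D U j)ᗮ))) ≃ₗᵢ[ℝ] (AjU D U j)ᗮ) :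
    Datum where
  m := D.m
  k := D.k
  r := fun i => finrank ℝ ((U i)ᗮ)
  nt := fun j => finrank ℝ ((AjU D U j)ᗮ)
  A := fun j => ((ψ' j).symm.toLinearEquiv : _ ≃ₗ[ℝ] _).toLinearMap ∘ₗ
    ((((AjU D U j)ᗮ).orthogonalProjectionOnto).toLinearMap ∘ₗ (D.A j ∘ₗ embedMapPerp D U φ'))
  c := D.c
  d := D.d

end BLEPI

/-! By Cauchy–Binet, `∑_S det (A_S)² = det (A Aᵀ) = 1`, the sum running over all `k`-subsets `S`
of the columns. The subsets avoiding `j` are the `k`-subsets of the columns of the matrix `A'`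
obtained by deleting column `j`, so by Cauchy–Binet again they contribute `det (A' A'ᵀ)`.
As `A' A'ᵀ = I - a aᵀ` for the `j`-th column `a`, this is `1 - aᵀ a`; the subsets containing `j`
contribute the rest, `aᵀ a = ∑ i, a_i²`. -/

namespace Finset

open Function Equiv

variable {ι : Type*} [LinearOrder ι] {k : ℕ}

theorem image_orderIsoOfFin_comp_perm (S : {S : Finset ι // S.card = k}) (σ : Perm (Fin k)) :
    univ.image (fun t => (S.1.orderIsoOfFin S.2 (σ t) : ι)) = S.1 := by
  refine (image_image (g := fun t => (S.1.orderIsoOfFin S.2 t : ι)) (f := σ)).symm.trans ?_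
  rw [image_univ_equiv]
  exact image_orderEmbOfFin_univ S.1 S.2

theorem exists_orderIsoOfFin_comp_perm_eq {p : Fin k → ι} (hp : Injective p) :
    ∃ (S : {S : Finset ι // S.card = k}) (σ : Perm (Fin k)),
      (fun t => (S.1.orderIsoOfFin S.2 (σ t) : ι)) = p := by
  have hcard : (univ.image p).card = k := by
    rw [card_image_of_injective _ hp, card_univ, Fintype.card_fin]
  let e := (univ.image p).orderIsoOfFin hcard
  let σ : Fin k → Fin k := fun t => e.symm ⟨p t, mem_image_of_mem p (mem_univ t)⟩
  have hσ : Injective σ := fun a b hab =>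
    hp (by simpa [σ] using congrArg (fun x => (e x : ι)) hab)
  exact ⟨⟨_, hcard⟩, Equiv.ofBijective σ (Finite.injective_iff_bijective.mp hσ), by
    funext t; simp [σ, e]⟩

theorem injective_orderIsoOfFin_comp_perm :
    Injective fun x : {S : Finset ι // S.card = k} × Perm (Fin k) =>
      fun t => (x.1.1.orderIsoOfFin x.1.2 (x.2 t) : ι) := by
  rintro ⟨S, σ⟩ ⟨T, τ⟩ h
  obtain rfl : S = T := Subtype.ext <| by
    rw [← image_orderIsoOfFin_comp_perm S σ, ← image_orderIsoOfFin_comp_perm T τ]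
    exact congrArg (univ.image ·) h
  refine Prod.ext rfl (Equiv.ext fun t => (S.1.orderIsoOfFin S.2).injective ?_)
  exact Subtype.ext (congrFun h t)

end Finset

namespace Matrix

open Finset Function Equiv

variable {m ι R : Type*} [CommRing R]

theorem det_mul_eq_sum_prod_mul_det_submatrix [Fintype m] [DecidableEq m] [Fintype ι]
    (A : Matrix m ι R) (B : Matrix ι m R) :
    (A * B).det = ∑ p : m → ι, (∏ r, A r (p r)) * (B.submatrix p id).det := by
  have hrows : A * B = fun r => ∑ l, A r l • B l := by
    ext r c; simp [mul_apply, Finset.sum_apply]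
  rw [hrows]
  exact ((detRowAlternating : (m → R) [⋀^m]→ₗ[R] R).toMultilinearMap.map_sum _).trans
    (Fintype.sum_congr _ _ fun p => detRowAlternating.map_smul_univ _ _)

theorem det_submatrix_eq_zero_of_not_injective [Fintype m] [DecidableEq m] {p : m → ι}
    (hp : ¬Injective p) (B : Matrix ι m R) : (B.submatrix p id).det = 0 := by
  obtain ⟨a, b, hab, hne⟩ : ∃ a b, p a = p b ∧ a ≠ b := by
    simpa [Function.Injective] using hp
  exact det_zero_of_row_eq hne (by ext c; simp [hab])

theorem sum_prod_mul_sign_eq_det [Fintype m] [DecidableEq m] (M : Matrix m m R) :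
    ∑ σ : Perm m, (∏ r, M r (σ r)) * (Perm.sign σ : R) = M.det := by
  rw [← det_transpose, det_apply]
  exact Fintype.sum_congr _ _ fun σ => by simp [Units.smul_def, mul_comm]

theorem det_one_sub_vecMulVec [Fintype m] [DecidableEq m] (u v : m → R) :
    (1 - vecMulVec u v).det = 1 - v ⬝ᵥ u := by
  rw [vecMulVec_eq Unit, det_one_sub_mul_comm, det_unique]
  simp

variable [LinearOrder ι] {k : ℕ}

def colSubmatrix {α : Type*} (A : Matrix m ι α) (S : {S : Finset ι // S.card = k}) :
    Matrix m (Fin k) α :=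
  A.submatrix id fun t => (S.1.orderIsoOfFin S.2 t : ι)

/-- **Cauchy–Binet**: every injective `p : Fin k → ι` enumerates a unique `k`-subset `S` in the
order given by a unique permutation `σ`, and the non-injective ones contribute nothing. -/
theorem det_mul_eq_sum_det_colSubmatrix_mul [Fintype ι] (A : Matrix (Fin k) ι R)
    (B : Matrix ι (Fin k) R) :
    (A * B).det = ∑ S : {S : Finset ι // S.card = k},
      (A.colSubmatrix S).det * (Bᵀ.colSubmatrix S).det := by
  rw [det_mul_eq_sum_prod_mul_det_submatrix, ← sum_of_injOn _
    injective_orderIsoOfFin_comp_perm.injOn (fun _ _ => mem_univ _) ?vanish fun _ _ => rfl,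
    Fintype.sum_prod_type]
  case vanish =>
    intro p _ hp
    have hnotinj : ¬Injective p := fun hinj => by
      obtain ⟨S, σ, h⟩ := exists_orderIsoOfFin_comp_perm_eq hinj
      exact hp ⟨(S, σ), by simp, h⟩
    rw [det_submatrix_eq_zero_of_not_injective hnotinj, mul_zero]
  refine Fintype.sum_congr _ _ fun S => ?_
  have hperm (σ : Perm (Fin k)) :
      (B.submatrix (fun t => (S.1.orderIsoOfFin S.2 (σ t) : ι)) id).det =
        Perm.sign σ * (Bᵀ.colSubmatrix S).det := by
    rw [← det_transpose (Bᵀ.colSubmatrix S), ← det_permute]; rfl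
  simp_rw [hperm, ← sum_prod_mul_sign_eq_det (A.colSubmatrix S), sum_mul, mul_assoc]
  rfl

theorem det_mul_transpose_eq_sum_sq_det_colSubmatrix [Fintype ι] (A : Matrix (Fin k) ι R) :
    (A * Aᵀ).det = ∑ S : {S : Finset ι // S.card = k}, (A.colSubmatrix S).det ^ 2 := by
  simp_rw [det_mul_eq_sum_det_colSubmatrix_mul, transpose_transpose, sq]

theorem colSubmatrix_submatrix_subtype_val {α : Type*} {p : ι → Prop} (A : Matrix m ι α)
    (S : {S : Finset (Subtype p) // S.card = k}) :
    (A.submatrix id Subtype.val).colSubmatrix S =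
      A.colSubmatrix ⟨S.1.map (Embedding.subtype p), (card_map _).trans S.2⟩ := by
  have horder := orderEmbOfFin_unique ((card_map _).trans S.2)
    (f := fun t => ((S.1.orderIsoOfFin S.2 t : Subtype p) : ι))
    (fun t => mem_map_of_mem (Embedding.subtype p) (S.1.orderIsoOfFin S.2 t).2)
    (Subtype.strictMono_coe p |>.comp (S.1.orderIsoOfFin S.2).strictMono)
  ext r t
  exact congrArg (A r) (congrFun horder t)

theorem sum_sq_det_colSubmatrix_of_not_mem [Fintype ι] (A : Matrix (Fin k) ι R) (j : ι) :
    ∑ S : {S : {S : Finset ι // S.card = k} // j ∉ S.1}, (A.colSubmatrix S.1).det ^ 2 =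
      (A.submatrix id (Subtype.val : {x // x ≠ j} → ι) *
        (A.submatrix id (Subtype.val : {x // x ≠ j} → ι))ᵀ).det := by
  rw [det_mul_transpose_eq_sum_sq_det_colSubmatrix]
  symm
  let e (S : {S : Finset {x // x ≠ j} // S.card = k}) :
      {S : {S : Finset ι // S.card = k} // j ∉ S.1} :=
    ⟨⟨S.1.map (Embedding.subtype _), (card_map _).trans S.2⟩, fun h => by
      obtain ⟨x, -, hx⟩ := mem_map.1 h
      exact x.2 hx⟩
  refine Fintype.sum_bijective e ⟨?_, ?_⟩ _ _ fun S => by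
    rw [colSubmatrix_submatrix_subtype_val]
  · intro S T h
    exact Subtype.ext (Finset.map_injective _ (congrArg (·.1.1) h))
  · rintro ⟨⟨S, hcard⟩, hj⟩
    have hmem : ∀ x ∈ S, x ≠ j := fun x hx hxj => hj (hxj ▸ hx)
    refine ⟨⟨S.subtype (· ≠ j), ?_⟩, ?_⟩
    · rw [← card_map (Embedding.subtype _), subtype_map_of_mem hmem, hcard]
    · exact Subtype.ext (Subtype.ext (subtype_map_of_mem hmem))

theorem submatrix_ne_mul_transpose [Fintype ι] (A : Matrix m ι R) (j : ι) :
    A.submatrix id (Subtype.val : {x // x ≠ j} → ι) *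
        (A.submatrix id (Subtype.val : {x // x ≠ j} → ι))ᵀ =
      A * Aᵀ - vecMulVec (fun i => A i j) (fun i => A i j) := by
  ext a b
  simp [mul_apply, vecMulVec_apply, Fintype.sum_eq_add_sum_subtype_ne _ j]

end Matrix

open Matrix

namespace BLEPI

/-- For a `k × n` matrix `A` with orthonormal rows and any fixed column index `j`, the sum
of `det(A_S)²` over all `k`-element subsets `S` of columns containing `j` equals `α_j²`,
the squared norm of the `j`-th column of `A`. -/
theorem cauchyBinet_column_coefficient (k n : ℕ) (A : Matrix (Fin k) (Fin n) ℝ)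
    (hA : A * A.transpose = 1) (j : Fin n) :
    ∑ S : {S : Finset (Fin n) // S.card = k ∧ j ∈ S},
        (A.submatrix id (fun t : Fin k => ((S.1.orderIsoOfFin S.2.1) t : Fin n))).det ^ 2 =
      ∑ i, (A i j) ^ 2 := by
  have hreindex : ∑ S : {S : Finset (Fin n) // S.card = k ∧ j ∈ S},
        (A.submatrix id (fun t : Fin k => ((S.1.orderIsoOfFin S.2.1) t : Fin n))).det ^ 2 =
      ∑ S : {S : {S : Finset (Fin n) // S.card = k} // j ∈ S.1}, (A.colSubmatrix S.1).det ^ 2 :=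
    (Fintype.sum_equiv (Equiv.subtypeSubtypeEquivSubtypeInter _ _) _ _ fun _ => rfl).symm
  have hsplit := Fintype.sum_subtype_add_sum_subtype
    (fun S : {S : Finset (Fin n) // S.card = k} => j ∈ S.1) fun S => (A.colSubmatrix S).det ^ 2
  rw [← det_mul_transpose_eq_sum_sq_det_colSubmatrix, hA, det_one,
    sum_sq_det_colSubmatrix_of_not_mem, submatrix_ne_mul_transpose, hA,
    det_one_sub_vecMulVec] at hsplit
  simp only [dotProduct, ← sq] at hsplit
  linarith

end BLEPI
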